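/- For a Fell bundle ρ: B ↠ Γ, if a, b are sections and the source map s is injective on supp(b), then the convolution ab is defined and ‖ab‖₂ ≤ ‖a‖₂ ‖b‖_∞. If instead supp(a) is a slice (s and r injective on it), then ab is defined and ‖ab‖₂ ≤ ‖a‖_∞ ‖b‖₂. -/

import Mathlib

open Filter Topology

/-- An étale groupoid: a groupoid (partial multiplication encoded via `Option`,
with inverse, source and range maps) carrying a topology making inversion and
multiplication continuous, with open source map and a basis of open slices. -/
structure EtaleGroupoid (Γ : Type*) [TopologicalSpace Γ] where
  mul : Γ → Γ → Option Γ
  inv : Γ → Γ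
  s : Γ → Γ
  r : Γ → Γ
  s_unit : ∀ γ, mul γ (s γ) = some γ
  r_unit : ∀ γ, mul (r γ) γ = some γ
  mul_isSome : ∀ a b, (mul a b).isSome ↔ s a = r b
  inv_mul : ∀ γ, mul (inv γ) γ = some (s γ)
  mul_inv : ∀ γ, mul γ (inv γ) = some (r γ)
  inv_inv : ∀ γ, inv (inv γ) = γ
  s_inv : ∀ γ, s (inv γ) = r γ
  r_inv : ∀ γ, r (inv γ) = s γ
  s_s : ∀ γ, s (s γ) = s γ
  r_s : ∀ γ, r (s γ) = s γ
  inv_s : ∀ γ, inv (s γ) = s γ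
  s_r : ∀ γ, s (r γ) = r γ
  r_r : ∀ γ, r (r γ) = r γ
  inv_r : ∀ γ, inv (r γ) = r γ
  mul_s_s : ∀ γ, mul (s γ) (s γ) = some (s γ)
  mul_r_r : ∀ γ, mul (r γ) (r γ) = some (r γ)
  s_eq_r : ∀ {a b c}, mul a b = some c → s a = r b
  s_mul : ∀ {a b c}, mul a b = some c → s c = s b
  r_mul : ∀ {a b c}, mul a b = some c → r c = r a
  inv_mul_inv : ∀ {a b c}, mul a b = some c → mul (inv b) (inv a) = some (inv c)
  mul_assoc' : ∀ {a b c p q pc}, mul a b = some p → mul b c = some q →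
    mul p c = some pc → mul a q = some pc
  continuous_inv : Continuous inv
  continuous_s : Continuous s
  continuous_r : Continuous r
  isOpenMap_s : IsOpenMap s
  continuous_mul : Continuous fun p : {p : Γ × Γ // (mul p.1 p.2).isSome} =>
    (mul p.1.1 p.1.2).get p.2
  etale : ∀ γ : Γ, ∃ O : Set Γ, IsOpen O ∧ γ ∈ O ∧ Set.InjOn s O ∧ Set.InjOn r O

open scoped ENNReal NNReal

variable {Γ : Type*} [TopologicalSpace Γ]

/-- The unit space `Γ⁰` of an étale groupoid. -/
def EtaleGroupoid.units (G : EtaleGroupoid Γ) : Set Γ := Set.range G.s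

/-- A slice: a subset on which both the source and range maps are injective. -/
def EtaleGroupoid.IsSlice (G : EtaleGroupoid Γ) (B : Set Γ) : Prop :=
  Set.InjOn G.s B ∧ Set.InjOn G.r B

/-- Transport along an equality of base points between fibres. -/
def castE {X : Type*} {E : X → Type*} {α β : X} (h : α = β) (a : E α) : E β := h ▸ a

/-- A Fell bundle over an étale groupoid `G` on `Γ`: a Banach bundle whose
total space `Σ γ, E γ` is a topological *-semigroupoid over `Γ` with bilinear
products, antilinear involution, submultiplicative norm, the C*-identity
`‖b*b‖ = ‖b‖²`, and every `b*b` a square `a*a` of an element of the unit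
fibre over `s(ρ(b))`. -/
structure FellBundle {Γ : Type*} [TopologicalSpace Γ] (G : EtaleGroupoid Γ)
    (E : Γ → Type*) [∀ γ, NormedAddCommGroup (E γ)] [∀ γ, NormedSpace ℂ (E γ)]
    [∀ γ, CompleteSpace (E γ)] [TopologicalSpace (Σ γ, E γ)] where
  mul : ∀ {α β γ : Γ}, G.mul α β = some γ → E α → E β → E γ
  star : ∀ {γ : Γ}, E γ → E (G.inv γ)
  mul_add : ∀ {α β γ} (h : G.mul α β = some γ) (a : E α) (b c : E β),
      mul h a (b + c) = mul h a b + mul h a c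
  add_mul : ∀ {α β γ} (h : G.mul α β = some γ) (a b : E α) (c : E β),
      mul h (a + b) c = mul h a c + mul h b c
  smul_mul : ∀ {α β γ} (h : G.mul α β = some γ) (z : ℂ) (a : E α) (b : E β),
      mul h (z • a) b = z • mul h a b
  mul_smul : ∀ {α β γ} (h : G.mul α β = some γ) (z : ℂ) (a : E α) (b : E β),
      mul h a (z • b) = z • mul h a b
  mul_assoc : ∀ {a b c p q pc} (h1 : G.mul a b = some p) (h2 : G.mul b c = some q)
      (h3 : G.mul p c = some pc) (x : E a) (y : E b) (z : E c),
      mul h3 (mul h1 x y) z = mul (G.mul_assoc' h1 h2 h3) x (mul h2 y z)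
  star_add : ∀ {γ} (a b : E γ), star (a + b) = star a + star b
  star_smul : ∀ {γ} (z : ℂ) (a : E γ), star (z • a) = (starRingEnd ℂ z) • star a
  star_star : ∀ {γ} (a : E γ), star (star a) = castE (G.inv_inv γ).symm a
  star_mul : ∀ {α β γ} (h : G.mul α β = some γ) (a : E α) (b : E β),
      star (mul h a b) = mul (G.inv_mul_inv h) (star b) (star a)
  norm_mul_le : ∀ {α β γ} (h : G.mul α β = some γ) (a : E α) (b : E β),
      ‖mul h a b‖ ≤ ‖a‖ * ‖b‖
  norm_star : ∀ {γ} (a : E γ), ‖star a‖ = ‖a‖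
  cstar : ∀ {γ} (b : E γ), ‖mul (G.inv_mul γ) (star b) b‖ = ‖b‖ ^ 2
  exists_sq : ∀ {γ} (b : E γ), ∃ a : E (G.s γ),
      mul (G.mul_s_s γ) (castE (G.inv_s γ) (star a)) a = mul (G.inv_mul γ) (star b) b
  continuous_proj : Continuous (Sigma.fst : (Σ γ, E γ) → Γ)
  isOpenMap_proj : IsOpenMap (Sigma.fst : (Σ γ, E γ) → Γ)
  continuous_smul : ∀ z : ℂ, Continuous (fun b : Σ γ, E γ => (⟨b.1, z • b.2⟩ : Σ γ, E γ))
  continuous_add : Continuous (fun p : {p : (Σ γ, E γ) × (Σ γ, E γ) // p.1.1 = p.2.1} =>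
      (⟨p.1.1.1, p.1.1.2 + castE p.2.symm p.1.2.2⟩ : Σ γ, E γ))
  usc_norm : UpperSemicontinuous (fun b : Σ γ, E γ => ‖b.2‖)
  zero_lim : ∀ (l : Filter (Σ γ, E γ)) (x : Γ), Tendsto Sigma.fst l (𝓝 x) →
      Tendsto (fun b : Σ γ, E γ => ‖b.2‖) l (𝓝 (0 : ℝ)) →
      l ≤ 𝓝 (⟨x, 0⟩ : Σ γ, E γ)
  continuous_mul' : Continuous
      (fun p : {p : (Σ γ, E γ) × (Σ γ, E γ) // (G.mul p.1.1 p.2.1).isSome} =>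
        (⟨(G.mul p.1.1.1 p.1.2.1).get p.2,
          mul (Option.some_get p.2).symm p.1.1.2 p.1.2.2⟩ : Σ γ, E γ))
  continuous_star' : Continuous (fun b : Σ γ, E γ => (⟨G.inv b.1, star b.2⟩ : Σ γ, E γ))

namespace FellBundle

variable {G : EtaleGroupoid Γ} {E : Γ → Type*}
  [∀ γ, NormedAddCommGroup (E γ)] [∀ γ, NormedSpace ℂ (E γ)]
  [∀ γ, CompleteSpace (E γ)] [TopologicalSpace (Σ γ, E γ)]

/-- The convolution product of two sections: `ab(γ) = Σ_{γ=αβ} a(α)b(β)`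
(a `tsum`, i.e. junk value `0` if the sum does not converge unconditionally). -/
noncomputable def conv (F : FellBundle G E) (a b : ∀ γ, E γ) (γ : Γ) : E γ :=
  ∑' p : {p : Γ × Γ // G.mul p.1 p.2 = some γ}, F.mul p.2 (a p.1.1) (b p.1.2)

/-- The convolution product `ab` is defined: at each `γ` the net of finite
partial sums of `a(α)b(β)` over `γ = αβ` converges in the fibre `E γ`. -/
def ConvDefined (F : FellBundle G E) (a b : ∀ γ, E γ) : Prop :=
  ∀ γ : Γ, Summable (fun p : {p : Γ × Γ // G.mul p.1 p.2 = some γ} =>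
    F.mul p.2 (a p.1.1) (b p.1.2))

/-- The involution of sections: `a*(γ) = a(γ⁻¹)*`. -/
noncomputable def starSec (F : FellBundle G E) (a : ∀ γ, E γ) (γ : Γ) : E γ :=
  castE (G.inv_inv γ) (F.star (a (G.inv γ)))

/-- The pointwise *-square `a(γ)*a(γ) ∈ E (s γ)`. -/
noncomputable def starSq (F : FellBundle G E) (a : ∀ γ, E γ) (γ : Γ) : E (G.s γ) :=
  F.mul (G.inv_mul γ) (F.star (a γ)) (a γ)

/-- The (possibly infinite) supremum norm `‖a‖_∞` of a section. -/
noncomputable def supNorm (_F : FellBundle G E) (a : ∀ γ, E γ) : ℝ≥0∞ :=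
  ⨆ γ : Γ, (‖a γ‖₊ : ℝ≥0∞)

/-- The (possibly infinite) 2-norm
`‖a‖₂ = sup_{x} sup_{F ⊂ Γx finite} √‖Σ_{γ∈F} a(γ)*a(γ)‖`. -/
noncomputable def twoNorm (F : FellBundle G E) (a : ∀ γ, E γ) : ℝ≥0∞ :=
  ⨆ x : Γ, ⨆ s : Finset {γ : Γ // G.s γ = x},
    ENNReal.ofReal (Real.sqrt ‖∑ γ ∈ s, castE γ.prop (F.starSq a γ.val)‖)

/-- The (possibly infinite) 1-norm `‖a‖₁ = sup_{x∈Γ⁰} Σ_{γ∈Γx} ‖a(γ)‖`. -/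
noncomputable def oneNorm (_F : FellBundle G E) (a : ∀ γ, E γ) : ℝ≥0∞ :=
  ⨆ x : Γ, ∑' γ : {γ : Γ // G.s γ = x}, (‖a γ.val‖₊ : ℝ≥0∞)

/-- The (possibly infinite) b-norm
`‖a‖_b = sup {‖af‖₂/‖f‖₂ : f finitely supported}` (with `0/0 = 0`). -/
noncomputable def bNorm (F : FellBundle G E) (a : ∀ γ, E γ) : ℝ≥0∞ :=
  ⨆ f : {f : ∀ γ, E γ // {γ | f γ ≠ 0}.Finite},
    F.twoNorm (F.conv a f.val) / F.twoNorm f.val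

/-- Positivity in the C*-algebra unit fibre `E (s γ)`: being of the form `c*c`. -/
def posAt (F : FellBundle G E) (γ : Γ) (p : E (G.s γ)) : Prop :=
  ∃ c : E (G.s γ), p = F.mul (G.mul_s_s γ) (castE (G.inv_s γ) (F.star c)) c

/-- Positivity in the C*-algebra unit fibre `E (r γ)`: being of the form `c*c`. -/
def posAtR (F : FellBundle G E) (γ : Γ) (p : E (G.r γ)) : Prop :=
  ∃ c : E (G.r γ), p = F.mul (G.mul_r_r γ) (castE (G.inv_r γ) (F.star c)) c

end FellBundle

open Classical in
/-- The 0-restriction `a_Δ` of a section: equal to `a` on `Δ` and `0` elsewhere. -/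
noncomputable def restrictSec {Γ : Type*} {E : Γ → Type*} [∀ γ, NormedAddCommGroup (E γ)]
    (Δ : Set Γ) (a : ∀ γ, E γ) (γ : Γ) : E γ :=
  if γ ∈ Δ then a γ else 0

variable {Γ : Type*} [TopologicalSpace Γ] {G : EtaleGroupoid Γ} {E : Γ → Type*}
  [∀ γ, NormedAddCommGroup (E γ)] [∀ γ, NormedSpace ℂ (E γ)]
  [∀ γ, CompleteSpace (E γ)] [TopologicalSpace (Σ γ, E γ)]

/-!
In both cases each sum `Σ_{γ = αβ} a(α) b(β)` has at most one nonzero term, since `β` ranges over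
the fibre of `s` through `γ` and `α` over the fibre of `r` through `γ`. So `ab` is defined and
`ab(γ) = a(α) b(β)`.

If `s` is injective on `supp b`, all `γ` in a fibre `Γx` share the same `β`, so
`Σ_γ ab(γ)* ab(γ) = b(β)* (Σ_γ a(α)* a(α)) b(β)`, with distinct `α`, has norm at most
`‖b(β)‖² ‖Σ_γ a(α)* a(α)‖`.

If `supp a` is a slice, the `β` are distinct and `ab(γ)* ab(γ) ≤ ‖a(α)‖² b(β)* b(β)` in the
C*-algebra `E x`, where the norm is monotone on positive elements. That inequality comes from the
unitization of the fibre over `r β`: there `‖a(α)‖² - a(α)* a(α) = u* u`, and the map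
`λ + p ↦ λ b(β)* b(β) + b(β)* p b(β)` sends `u* u` to the square `(u b(β))* (u b(β))`.
-/

namespace EtaleGroupoid

variable (G)

theorem mul_inv_of_mul_eq {a b c : Γ} (h : G.mul a b = some c) :
    G.mul c (G.inv b) = some a := by
  obtain ⟨d, hd⟩ := Option.isSome_iff_exists.mp <|
    (G.mul_isSome c (G.inv b)).mpr (by rw [G.s_mul h, G.r_inv])
  have hunit : G.mul a (G.r b) = some a := by rw [← G.s_eq_r h, G.s_unit]
  exact hd.trans (hunit ▸ G.mul_assoc' h (G.mul_inv b) hd).symm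

theorem inv_mul_of_mul_eq {a b c : Γ} (h : G.mul a b = some c) :
    G.mul (G.inv a) c = some b :=
  G.mul_assoc' (G.inv_mul a) h (by rw [G.s_eq_r h, G.r_unit])

theorem mul_right_cancel {a a' b c : Γ} (h : G.mul a b = some c) (h' : G.mul a' b = some c) :
    a = a' :=
  Option.some_inj.mp ((G.mul_inv_of_mul_eq h).symm.trans (G.mul_inv_of_mul_eq h'))

theorem mul_left_cancel {a b b' c : Γ} (h : G.mul a b = some c) (h' : G.mul a b' = some c) :
    b = b' :=
  Option.some_inj.mp ((G.inv_mul_of_mul_eq h).symm.trans (G.inv_mul_of_mul_eq h'))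

theorem exists_mul_eq_of_s_eq {b c : Γ} (h : G.s c = G.s b) : ∃ a, G.mul a b = some c := by
  obtain ⟨a, ha⟩ := Option.isSome_iff_exists.mp <|
    (G.mul_isSome c (G.inv b)).mpr (by rw [G.r_inv, h])
  exact ⟨a, G.inv_inv b ▸ G.mul_inv_of_mul_eq ha⟩

theorem exists_mul_eq_of_r_eq {a c : Γ} (h : G.r c = G.r a) : ∃ b, G.mul a b = some c := by
  obtain ⟨b, hb⟩ := Option.isSome_iff_exists.mp <|
    (G.mul_isSome (G.inv a) c).mpr (by rw [G.s_inv, h])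
  exact ⟨b, G.inv_inv a ▸ G.inv_mul_of_mul_eq hb⟩

theorem r_mem_units (γ : Γ) : G.r γ ∈ G.units := ⟨G.r γ, G.s_r γ⟩

variable {G}

theorem s_eq_self_of_mem_units {x : Γ} (hx : x ∈ G.units) : G.s x = x := by
  obtain ⟨γ, rfl⟩ := hx
  exact G.s_s γ

theorem inv_eq_self_of_mem_units {x : Γ} (hx : x ∈ G.units) : G.inv x = x := by
  obtain ⟨γ, rfl⟩ := hx
  exact G.inv_s γ

theorem mul_self_of_mem_units {x : Γ} (hx : x ∈ G.units) : G.mul x x = some x := by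
  obtain ⟨γ, rfl⟩ := hx
  exact G.mul_s_s γ

end EtaleGroupoid

section castE

variable {X : Type*} {V : X → Type*} {x y z : X}

@[simp]
theorem castE_rfl (v : V x) : castE (E := V) rfl v = v := rfl

theorem castE_castE (h₁ : x = y) (h₂ : y = z) (v : V x) :
    castE (E := V) h₂ (castE h₁ v) = castE (h₁.trans h₂) v := by
  subst h₁ h₂; rfl

theorem castE_zero [∀ x, Zero (V x)] (h : x = y) : castE (E := V) h 0 = 0 := by
  subst h; rfl

theorem castE_add [∀ x, Add (V x)] (h : x = y) (v w : V x) :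
    castE (E := V) h (v + w) = castE h v + castE h w := by
  subst h; rfl

theorem castE_sub [∀ x, Sub (V x)] (h : x = y) (v w : V x) :
    castE (E := V) h (v - w) = castE h v - castE h w := by
  subst h; rfl

theorem castE_smul {R : Type*} [∀ x, SMul R (V x)] (h : x = y) (c : R) (v : V x) :
    castE (E := V) h (c • v) = c • castE h v := by
  subst h; rfl

theorem castE_sum [∀ x, AddCommMonoid (V x)] {ι : Type*} (h : x = y) (S : Finset ι)
    (f : ι → V x) : castE (E := V) h (∑ i ∈ S, f i) = ∑ i ∈ S, castE h (f i) := by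
  subst h; rfl

theorem norm_castE [∀ x, Norm (V x)] (h : x = y) (v : V x) : ‖castE (E := V) h v‖ = ‖v‖ := by
  subst h; rfl

end castE

theorem exists_forall_ne_eq_zero_of_injOn_support {X Y : Type*} {V : X → Type*}
    [∀ x, Zero (V x)] {f : X → Y} {b : ∀ x, V x} (hb : Set.InjOn f {x | b x ≠ 0}) (x : X) :
    ∃ x₀, f x₀ = f x ∧ ∀ x', f x' = f x → x' ≠ x₀ → b x' = 0 := by
  by_cases h : ∃ x₀, f x₀ = f x ∧ b x₀ ≠ 0
  · obtain ⟨x₀, hx₀, hb₀⟩ := h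
    exact ⟨x₀, hx₀, fun x' hx' hne => by_contra fun hb' => hne (hb hb' hb₀ (hx'.trans hx₀.symm))⟩
  · push Not at h
    exact ⟨x, rfl, fun x' hx' _ => h x' hx'⟩

theorem ENNReal.ofReal_sqrt_le_mul_ofReal_sqrt {s t c : ℝ} (hc : 0 ≤ c) (h : s ≤ c ^ 2 * t) :
    ENNReal.ofReal √s ≤ ENNReal.ofReal c * ENNReal.ofReal √t :=
  calc ENNReal.ofReal √s ≤ ENNReal.ofReal √(c ^ 2 * t) :=
        ENNReal.ofReal_le_ofReal (Real.sqrt_le_sqrt h)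
    _ = ENNReal.ofReal c * ENNReal.ofReal √t := by
        rw [Real.sqrt_mul (sq_nonneg c), Real.sqrt_sq hc, ENNReal.ofReal_mul hc]

namespace FellBundle

variable (F : FellBundle G E)

theorem mul_zero {α β γ : Γ} (h : G.mul α β = some γ) (u : E α) : F.mul h u (0 : E β) = 0 := by
  simpa using F.mul_add h u 0 0

theorem zero_mul {α β γ : Γ} (h : G.mul α β = some γ) (v : E β) : F.mul h (0 : E α) v = 0 := by
  simpa using F.add_mul h 0 0 v

theorem star_castE {α β : Γ} (h : α = β) (u : E α) :
    F.star (castE h u) = castE (congrArg G.inv h) (F.star u) := by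
  subst h; rfl

theorem mul_castE {α α' β β' γ γ' : Γ} (hα : α' = α) (hβ : β' = β) (hγ : γ' = γ)
    (h : G.mul α β = some γ) (h' : G.mul α' β' = some γ') (u : E α') (v : E β') :
    F.mul h (castE hα u) (castE hβ v) = castE hγ (F.mul h' u v) := by
  subst hα hβ hγ; rfl

theorem mul_castE_left {α α' β γ γ' : Γ} (hα : α' = α) (hγ : γ' = γ)
    (h : G.mul α β = some γ) (h' : G.mul α' β = some γ') (u : E α') (v : E β) :
    F.mul h (castE hα u) v = castE hγ (F.mul h' u v) := by
  subst hα hγ; rfl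

noncomputable def starMulSelf {γ : Γ} (u : E γ) : E (G.s γ) :=
  F.mul (G.inv_mul γ) (F.star u) u

theorem starSq_eq (a : ∀ γ, E γ) (γ : Γ) : F.starSq a γ = F.starMulSelf (a γ) := rfl

theorem starMulSelf_zero (γ : Γ) : F.starMulSelf (0 : E γ) = 0 :=
  F.mul_zero _ _

theorem norm_starMulSelf {γ : Γ} (u : E γ) : ‖F.starMulSelf u‖ = ‖u‖ ^ 2 := F.cstar u

theorem castE_star_castE_star {x : Γ} (h : G.inv x = x) (p : E x) :
    castE h (F.star (castE h (F.star p))) = p := by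
  rw [F.star_castE, castE_castE, F.star_star, castE_castE]
  rfl

theorem castE_star_mul {x : Γ} (h : G.inv x = x) (hxx : G.mul x x = some x) (p q : E x) :
    castE h (F.star (F.mul hxx p q)) = F.mul hxx (castE h (F.star q)) (castE h (F.star p)) := by
  rw [F.star_mul, F.mul_castE h h h hxx (G.inv_mul_inv hxx)]

theorem norm_castE_star_mul_self {x : Γ} (hx : x ∈ G.units) (p : E x) :
    ‖F.mul (EtaleGroupoid.mul_self_of_mem_units hx)
      (castE (EtaleGroupoid.inv_eq_self_of_mem_units hx) (F.star p)) p‖ = ‖p‖ * ‖p‖ := by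
  rw [F.mul_castE_left _ (EtaleGroupoid.s_eq_self_of_mem_units hx) _ (G.inv_mul x), norm_castE,
    ← starMulSelf, norm_starMulSelf, pow_two]

/- A copy of `E x` carrying the C*-algebra structure of the fibre over the unit `x`, so that
these instances (in particular the spectral order) do not attach to `E x` itself. -/
def UnitFiber (_F : FellBundle G E) (x : Γ) (_hx : x ∈ G.units) : Type _ := E x

section UnitFiber

variable {x : Γ} (hx : x ∈ G.units)

def toUnitFiber (p : E x) : F.UnitFiber x hx := p

instance : NormedAddCommGroup (F.UnitFiber x hx) := inferInstanceAs (NormedAddCommGroup (E x))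

noncomputable instance : NormedSpace ℂ (F.UnitFiber x hx) := inferInstanceAs (NormedSpace ℂ (E x))

instance : CompleteSpace (F.UnitFiber x hx) := inferInstanceAs (CompleteSpace (E x))

noncomputable instance : NonUnitalNormedRing (F.UnitFiber x hx) :=
  { (inferInstance : NormedAddCommGroup (F.UnitFiber x hx)) with
  mul := F.mul (EtaleGroupoid.mul_self_of_mem_units hx)
  left_distrib := F.mul_add _
  right_distrib := F.add_mul _
  zero_mul := F.zero_mul _
  mul_zero := F.mul_zero _
  mul_assoc := F.mul_assoc _ _ _
  norm_mul_le := F.norm_mul_le _ }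

noncomputable instance : StarRing (F.UnitFiber x hx) where
  star p := castE (EtaleGroupoid.inv_eq_self_of_mem_units hx) (F.star (E := E) p)
  star_involutive := F.castE_star_castE_star (EtaleGroupoid.inv_eq_self_of_mem_units hx)
  star_add p q := (congrArg (castE _) (F.star_add p q)).trans (castE_add _ _ _)
  star_mul := F.castE_star_mul (EtaleGroupoid.inv_eq_self_of_mem_units hx)
    (EtaleGroupoid.mul_self_of_mem_units hx)

instance : CStarRing (F.UnitFiber x hx) where
  norm_mul_self_le p := (F.norm_castE_star_mul_self hx p).ge

instance : IsScalarTower ℂ (F.UnitFiber x hx) (F.UnitFiber x hx) where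
  smul_assoc := F.smul_mul _

instance : SMulCommClass ℂ (F.UnitFiber x hx) (F.UnitFiber x hx) where
  smul_comm z p q := (F.mul_smul _ z p q).symm

instance : StarModule ℂ (F.UnitFiber x hx) where
  star_smul z p := (congrArg (castE _) (F.star_smul z p)).trans (castE_smul _ _ _)

noncomputable instance : NonUnitalCStarAlgebra (F.UnitFiber x hx) where

noncomputable instance : PartialOrder (F.UnitFiber x hx) := CStarAlgebra.spectralOrder _

instance : StarOrderedRing (F.UnitFiber x hx) := CStarAlgebra.spectralOrderedRing _

end UnitFiber

def posCone (x : Γ) : AddSubmonoid (E x) :=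
  AddSubmonoid.closure {p | ∃ (δ : Γ) (h : G.s δ = x) (c : E δ), p = castE h (F.starMulSelf c)}

theorem castE_starMulSelf_mem_posCone {δ x : Γ} (h : G.s δ = x) (c : E δ) :
    castE h (F.starMulSelf c) ∈ F.posCone x :=
  AddSubmonoid.subset_closure ⟨δ, h, c, rfl⟩

theorem castE_mem_posCone {x x' : Γ} (h : x = x') {p : E x} (hp : p ∈ F.posCone x) :
    castE h p ∈ F.posCone x' := by
  subst h; exact hp

theorem nonneg_of_mem_posCone {x : Γ} (hx : x ∈ G.units) {p : E x} (hp : p ∈ F.posCone x) :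
    0 ≤ F.toUnitFiber hx p := by
  induction hp using AddSubmonoid.closure_induction with
  | mem p hp =>
    obtain ⟨δ, rfl, c, rfl⟩ := hp
    obtain ⟨d, hd⟩ := F.exists_sq c
    rw [castE_rfl, starMulSelf, ← hd]
    exact star_mul_self_nonneg (F.toUnitFiber hx d)
  | zero => exact le_rfl
  | add p q _ _ hp hq => exact add_nonneg hp hq

theorem norm_le_norm_of_mem_posCone {x : Γ} {p q : E x} (hp : p ∈ F.posCone x)
    (hpq : q - p ∈ F.posCone x) : ‖p‖ ≤ ‖q‖ := by
  by_cases hx : x ∈ G.units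
  · exact CStarAlgebra.norm_le_norm_of_nonneg_of_le (F.nonneg_of_mem_posCone hx hp)
      (sub_nonneg.mp (F.nonneg_of_mem_posCone hx hpq))
  · have hempty : {p : E x | ∃ (δ : Γ) (h : G.s δ = x) (c : E δ),
        p = castE h (F.starMulSelf c)} = ∅ :=
      Set.eq_empty_of_forall_notMem fun _ ⟨δ, h, _⟩ => hx ⟨δ, h⟩
    rw [posCone, hempty, AddSubmonoid.closure_empty, AddSubmonoid.mem_bot] at hp
    simp [hp]

noncomputable def conj {β : Γ} (y : E β) : E (G.r β) →ₗ[ℂ] E (G.s β) where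
  toFun p := F.mul (G.inv_mul β) (F.star y) (F.mul (G.r_unit β) p y)
  map_add' p q := by rw [F.add_mul, F.mul_add]
  map_smul' z p := by rw [F.smul_mul, F.mul_smul, RingHom.id_apply]

theorem conj_apply {β : Γ} (y : E β) (p : E (G.r β)) :
    F.conj y p = F.mul (G.inv_mul β) (F.star y) (F.mul (G.r_unit β) p y) := rfl

theorem norm_conj_le {β : Γ} (y : E β) (p : E (G.r β)) : ‖F.conj y p‖ ≤ ‖y‖ ^ 2 * ‖p‖ :=
  calc ‖F.conj y p‖ ≤ ‖F.star y‖ * (‖p‖ * ‖y‖) :=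
        (F.norm_mul_le _ _ _).trans (by gcongr; exact F.norm_mul_le _ _ _)
    _ = ‖y‖ ^ 2 * ‖p‖ := by rw [F.norm_star]; ring

theorem conj_starMulSelf {α β γ : Γ} (h : G.mul α β = some γ) (u : E α) (v : E β) :
    F.conj v (castE (G.s_eq_r h) (F.starMulSelf u)) =
      castE (G.s_mul h) (F.starMulSelf (F.mul h u v)) := by
  have hsβ : G.mul (G.s α) β = some β := by rw [G.s_eq_r h]; exact G.r_unit β
  rw [conj_apply, F.mul_castE_left (G.s_eq_r h) rfl (G.r_unit β) hsβ, castE_rfl, starMulSelf,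
    starMulSelf, F.star_mul, F.mul_assoc (G.inv_mul_inv h) (G.inv_mul_of_mul_eq h) (G.inv_mul γ),
    ← F.mul_assoc (G.inv_mul α) h hsβ]
  exact F.mul_castE rfl rfl (G.s_mul h) _ _ _ _

theorem star_mul_mul_eq_conj_star {β : Γ} (p : E (G.r β)) (y : E β) :
    F.mul (G.inv_mul β) (F.star (F.mul (G.r_unit β) p y)) y =
      F.conj y (castE (G.inv_r β) (F.star p)) := by
  have hβ : G.mul (G.inv (G.r β)) β = some β := by rw [G.inv_r]; exact G.r_unit β
  rw [F.star_mul, F.mul_assoc (G.inv_mul_inv (G.r_unit β)) hβ (G.inv_mul β), conj_apply,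
    F.mul_castE_left (G.inv_r β) rfl (G.r_unit β) hβ, castE_rfl]

theorem starMulSelf_mul_eq_conj {β : Γ} (p : E (G.r β)) (y : E β) :
    F.starMulSelf (F.mul (G.r_unit β) p y) =
      F.conj y (F.mul (G.mul_r_r β) (castE (G.inv_r β) (F.star p)) p) := by
  have hβ : G.mul (G.inv (G.r β)) β = some β := by rw [G.inv_r]; exact G.r_unit β
  have hsβ : G.mul (G.s (G.r β)) β = some β := by rw [G.s_r]; exact G.r_unit β
  rw [starMulSelf, F.star_mul, F.mul_assoc (G.inv_mul_inv (G.r_unit β)) hβ (G.inv_mul β),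
    ← F.mul_assoc (G.inv_mul (G.r β)) (G.r_unit β) hsβ, conj_apply,
    F.mul_castE_left (G.inv_r β) (G.s_r β) (G.mul_r_r β) (G.inv_mul (G.r β)),
    F.mul_castE_left (G.s_r β) rfl (G.r_unit β) hsβ, castE_rfl]

theorem starMulSelf_smul_add_mul {β : Γ} (y : E β) (c : ℂ) (p : E (G.r β)) :
    F.starMulSelf (c • y + F.mul (G.r_unit β) p y) =
      (starRingEnd ℂ c * c) • F.starMulSelf y + F.conj y (starRingEnd ℂ c • p +
        c • castE (G.inv_r β) (F.star p) + F.mul (G.mul_r_r β) (castE (G.inv_r β) (F.star p)) p) := by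
  rw [starMulSelf, F.star_add, F.star_smul, F.add_mul, F.mul_add, F.mul_add, F.smul_mul,
    F.smul_mul, F.mul_smul, F.mul_smul, smul_smul, ← starMulSelf, ← conj_apply,
    F.star_mul_mul_eq_conj_star, ← starMulSelf, F.starMulSelf_mul_eq_conj]
  simp only [map_add, map_smul]
  abel

theorem smul_starMulSelf_sub_conj_mem_posCone {β : Γ} (y : E β)
    {q : E (G.r β)} (hq : 0 ≤ F.toUnitFiber (G.r_mem_units β) q) {c : ℝ} (hqc : ‖q‖ ≤ c) :
    (c : ℂ) • F.starMulSelf y - F.conj y q ∈ F.posCone (G.s β) := by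
  have hc : 0 ≤ c := (norm_nonneg q).trans hqc
  obtain ⟨u, hu⟩ := CStarAlgebra.nonneg_iff_eq_star_mul_self.mp <| sub_nonneg.mpr <|
    (CStarAlgebra.norm_le_iff_le_algebraMap
      (F.toUnitFiber (G.r_mem_units β) q : Unitization ℂ (F.UnitFiber (G.r β) _)) hc
      (Unitization.inr_nonneg_iff.mpr hq)).mp (by rwa [Unitization.norm_inr])
  have hu' := eq_add_of_sub_eq hu
  have hfst := congrArg (·.fst) hu'
  have hsnd := congrArg (·.snd) hu'
  simp only [Unitization.algebraMap_eq_inl_comp, Function.comp_apply, Unitization.fst_inl,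
    Unitization.snd_inl, Unitization.fst_add, Unitization.snd_add, Unitization.fst_inr,
    Unitization.snd_inr, Unitization.fst_mul, Unitization.snd_mul, Unitization.fst_star,
    Unitization.snd_star, add_zero] at hfst hsnd
  have hmem := F.castE_starMulSelf_mem_posCone rfl (u.fst • y + F.mul (G.r_unit β) u.snd y)
  rw [castE_rfl, F.starMulSelf_smul_add_mul y u.fst u.snd] at hmem
  rw [sub_eq_add_neg, ← map_neg]
  convert hmem using 3
  · exact hfst
  · exact (eq_neg_of_add_eq_zero_left hsnd.symm).symm

theorem smul_starMulSelf_sub_starMulSelf_mul_mem_posCone {α β γ : Γ} (h : G.mul α β = some γ)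
    (u : E α) (v : E β) {M : ℝ} (hM : ‖u‖ ≤ M) :
    ((M ^ 2 : ℝ) : ℂ) • F.starMulSelf v - castE (G.s_mul h) (F.starMulSelf (F.mul h u v)) ∈
      F.posCone (G.s β) := by
  rw [← F.conj_starMulSelf h]
  refine F.smul_starMulSelf_sub_conj_mem_posCone v
    (F.nonneg_of_mem_posCone _ (F.castE_starMulSelf_mem_posCone _ u)) ?_
  rw [norm_castE, norm_starMulSelf]
  gcongr

theorem norm_sum_starMulSelf_mul_le {ι : Type*} {x : Γ} (S : Finset ι) {α β γ : ι → Γ}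
    (h : ∀ i, G.mul (α i) (β i) = some (γ i)) (hγ : ∀ i, G.s (γ i) = x)
    (u : ∀ i, E (α i)) (v : ∀ i, E (β i)) {M : ℝ} (hM : ∀ i ∈ S, ‖u i‖ ≤ M) :
    ‖∑ i ∈ S, castE (hγ i) (F.starMulSelf (F.mul (h i) (u i) (v i)))‖ ≤
      M ^ 2 * ‖∑ i ∈ S, castE ((G.s_mul (h i)).symm.trans (hγ i)) (F.starMulSelf (v i))‖ := by
  have hle : ((M ^ 2 : ℝ) : ℂ) • ∑ i ∈ S, castE ((G.s_mul (h i)).symm.trans (hγ i))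
      (F.starMulSelf (v i)) - ∑ i ∈ S, castE (hγ i) (F.starMulSelf (F.mul (h i) (u i) (v i))) ∈
      F.posCone x := by
    rw [Finset.smul_sum, ← Finset.sum_sub_distrib]
    refine sum_mem fun i hi => ?_
    have := F.castE_mem_posCone ((G.s_mul (h i)).symm.trans (hγ i))
      (F.smul_starMulSelf_sub_starMulSelf_mul_mem_posCone (h i) (u i) (v i) (hM i hi))
    rwa [castE_sub, castE_smul, castE_castE] at this
  have := F.norm_le_norm_of_mem_posCone
    (sum_mem fun i _ => F.castE_starMulSelf_mem_posCone _ _) hle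
  rwa [norm_smul, Complex.norm_real, Real.norm_of_nonneg (sq_nonneg M)] at this

section Convolution

variable (a b : ∀ γ, E γ)

theorem hasSum_conv_of_right {α β₀ γ : Γ} (h : G.mul α β₀ = some γ)
    (hb : ∀ β, G.s β = G.s γ → β ≠ β₀ → b β = 0) :
    HasSum (fun p : {p : Γ × Γ // G.mul p.1 p.2 = some γ} => F.mul p.2 (a p.1.1) (b p.1.2))
      (F.mul h (a α) (b β₀)) := by
  refine hasSum_single (⟨(α, β₀), h⟩ : {p : Γ × Γ // G.mul p.1 p.2 = some γ}) fun p hne => ?_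
  have hβ' : p.1.2 ≠ β₀ := fun hβ =>
    hne (Subtype.ext (Prod.ext (G.mul_right_cancel (hβ ▸ p.2) h) hβ))
  rw [hb p.1.2 (G.s_mul p.2).symm hβ', F.mul_zero]

theorem hasSum_conv_of_left {α₀ β γ : Γ} (h : G.mul α₀ β = some γ)
    (ha : ∀ α, G.r α = G.r γ → α ≠ α₀ → a α = 0) :
    HasSum (fun p : {p : Γ × Γ // G.mul p.1 p.2 = some γ} => F.mul p.2 (a p.1.1) (b p.1.2))
      (F.mul h (a α₀) (b β)) := by
  refine hasSum_single (⟨(α₀, β), h⟩ : {p : Γ × Γ // G.mul p.1 p.2 = some γ}) fun p hne => ?_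
  have hα' : p.1.1 ≠ α₀ := fun hα =>
    hne (Subtype.ext (Prod.ext hα (G.mul_left_cancel (hα ▸ p.2) h)))
  rw [ha p.1.1 (G.r_mul p.2).symm hα', F.zero_mul]

theorem convDefined_of_injOn_s (hb : Set.InjOn G.s {γ | b γ ≠ 0}) : F.ConvDefined a b := by
  intro γ
  obtain ⟨β₀, hβ₀, hb₀⟩ := exists_forall_ne_eq_zero_of_injOn_support hb γ
  obtain ⟨α, h⟩ := G.exists_mul_eq_of_s_eq hβ₀.symm
  exact (F.hasSum_conv_of_right a b h hb₀).summable

theorem convDefined_of_injOn_r (ha : Set.InjOn G.r {γ | a γ ≠ 0}) : F.ConvDefined a b := by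
  intro γ
  obtain ⟨α₀, hα₀, ha₀⟩ := exists_forall_ne_eq_zero_of_injOn_support ha γ
  obtain ⟨β, h⟩ := G.exists_mul_eq_of_r_eq hα₀.symm
  exact (F.hasSum_conv_of_left a b h ha₀).summable

theorem ofReal_norm_le_supNorm (γ : Γ) : ENNReal.ofReal ‖a γ‖ ≤ F.supNorm a := by
  rw [← coe_nnnorm, ENNReal.ofReal_coe_nnreal]
  exact le_iSup (fun γ => (‖a γ‖₊ : ℝ≥0∞)) γ

theorem ofReal_sqrt_norm_sum_le_twoNorm {ι : Type*} {x : Γ} (S : Finset ι) (f : ι → Γ)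
    (hf : ∀ i, G.s (f i) = x) (hinj : Set.InjOn f S) :
    ENNReal.ofReal √‖∑ i ∈ S, castE (hf i) (F.starSq a (f i))‖ ≤ F.twoNorm a := by
  classical
  let g : ι → {γ : Γ // G.s γ = x} := fun i => ⟨f i, hf i⟩
  have hsum : ∑ i ∈ S, castE (hf i) (F.starSq a (f i)) =
      ∑ γ ∈ S.image g, castE γ.prop (F.starSq a γ) :=
    (Finset.sum_image (g := g)
      (f := fun γ : {γ : Γ // G.s γ = x} => castE γ.prop (F.starSq a γ))
      fun i hi j hj hij => hinj hi hj (congrArg Subtype.val hij)).symm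
  rw [hsum]
  exact le_iSup₂ (f := fun x (T : Finset {γ : Γ // G.s γ = x}) =>
    ENNReal.ofReal √‖∑ γ ∈ T, castE γ.prop (F.starSq a γ)‖) x (S.image g)

theorem twoNorm_conv_le_of_injOn_s (hb : Set.InjOn G.s {γ | b γ ≠ 0}) :
    F.twoNorm (F.conv a b) ≤ F.twoNorm a * F.supNorm b := by
  refine iSup₂_le fun x S => ?_
  rcases S.eq_empty_or_nonempty with rfl | ⟨γ₀, -⟩
  · simp
  obtain ⟨β₀, hβ₀, hb₀⟩ := exists_forall_ne_eq_zero_of_injOn_support hb γ₀.val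
  have hsγ : ∀ γ : {γ : Γ // G.s γ = x}, G.s γ = G.s γ₀ := fun γ => γ.prop.trans γ₀.prop.symm
  choose α hα using fun γ : {γ : Γ // G.s γ = x} =>
    G.exists_mul_eq_of_s_eq ((hsγ γ).trans hβ₀.symm)
  have hsum : ∑ γ ∈ S, castE γ.prop (F.starSq (F.conv a b) γ) =
      castE (hβ₀.trans γ₀.prop)
        (F.conj (b β₀) (∑ γ ∈ S, castE (G.s_eq_r (hα γ)) (F.starSq a (α γ)))) := by
    rw [map_sum, castE_sum]
    refine Finset.sum_congr rfl fun γ _ => ?_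
    have hconv : F.conv a b γ = F.mul (hα γ) (a (α γ)) (b β₀) :=
      (F.hasSum_conv_of_right a b (hα γ) fun β hβ => hb₀ β (hβ.trans (hsγ γ))).tsum_eq
    rw [starSq_eq, starSq_eq, F.conj_starMulSelf (hα γ), castE_castE, hconv]
  rw [hsum, norm_castE, mul_comm]
  exact (ENNReal.ofReal_sqrt_le_mul_ofReal_sqrt (norm_nonneg _) (F.norm_conj_le _ _)).trans
    (mul_le_mul' (F.ofReal_norm_le_supNorm b β₀)
      (F.ofReal_sqrt_norm_sum_le_twoNorm a S α _ fun γ _ γ' _ h =>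
        Subtype.ext (Option.some_inj.mp ((hα γ).symm.trans (h ▸ hα γ')))))

theorem twoNorm_conv_le_of_isSlice (ha : G.IsSlice {γ | a γ ≠ 0}) :
    F.twoNorm (F.conv a b) ≤ F.supNorm a * F.twoNorm b := by
  classical
  refine iSup₂_le fun x S => ?_
  choose α hαr hα using fun γ : Γ => exists_forall_ne_eq_zero_of_injOn_support ha.2 γ
  choose β hβ using fun γ : Γ => G.exists_mul_eq_of_r_eq (hαr γ).symm
  have hconv : ∀ γ, F.conv a b γ = F.mul (hβ γ) (a (α γ)) (b (β γ)) := fun γ =>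
    (F.hasSum_conv_of_left a b (hβ γ) (hα γ)).tsum_eq
  -- the `β γ` are distinct only where `a (α γ) ≠ 0`
  set S' := S.filter fun γ : {γ : Γ // G.s γ = x} => a (α γ) ≠ 0
  set M : ℝ≥0 := S'.sup fun γ : {γ : Γ // G.s γ = x} => ‖a (α γ)‖₊
  have hsum : ∑ γ ∈ S, castE γ.prop (F.starSq (F.conv a b) γ) =
      ∑ γ ∈ S', castE γ.prop (F.starMulSelf (F.mul (hβ γ) (a (α γ)) (b (β γ)))) := by
    simp only [starSq_eq, hconv]
    refine (Finset.sum_filter_of_ne fun γ _ hne => ?_).symm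
    contrapose! hne
    rw [hne, F.zero_mul, starMulSelf_zero, castE_zero]
  have hM : ENNReal.ofReal M ≤ F.supNorm a := by
    rw [ENNReal.ofReal_coe_nnreal, ENNReal.coe_finset_sup]
    exact Finset.sup_le fun γ _ => le_iSup (fun γ => (‖a γ‖₊ : ℝ≥0∞)) (α γ)
  rw [hsum]
  refine (ENNReal.ofReal_sqrt_le_mul_ofReal_sqrt M.2 (F.norm_sum_starMulSelf_mul_le S'
      (γ := Subtype.val) (fun γ => hβ γ) Subtype.prop _ _ fun γ hγ => Finset.le_sup
        (f := fun γ : {γ : Γ // G.s γ = x} => ‖a (α γ)‖₊) hγ)).trans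
    (mul_le_mul' hM (F.ofReal_sqrt_norm_sum_le_twoNorm b S' _ _ ?_))
  intro γ hγ γ' hγ' (h : β γ = β γ')
  have hα : α γ = α γ' := ha.1 (Finset.mem_filter.mp hγ).2 (Finset.mem_filter.mp hγ').2 <| by
    rw [G.s_eq_r (hβ γ), G.s_eq_r (hβ γ')]
    exact congrArg G.r h
  exact Subtype.ext (Option.some_inj.mp ((hβ γ).symm.trans (by rw [hα, h]; exact hβ γ')))

end Convolution

end FellBundle

/-- If `s` is injective on `supp b` then `ab` is defined and
`‖ab‖₂ ≤ ‖a‖₂‖b‖_∞`; if `supp a` is a slice then `ab` is defined and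
`‖ab‖₂ ≤ ‖a‖_∞‖b‖₂`. -/
theorem stmt14 (F : FellBundle G E) (a b : ∀ γ, E γ) :
    (Set.InjOn G.s {γ | b γ ≠ 0} →
      F.ConvDefined a b ∧ F.twoNorm (F.conv a b) ≤ F.twoNorm a * F.supNorm b) ∧
    (G.IsSlice {γ | a γ ≠ 0} →
      F.ConvDefined a b ∧ F.twoNorm (F.conv a b) ≤ F.supNorm a * F.twoNorm b) :=
  ⟨fun hb => ⟨F.convDefined_of_injOn_s a b hb, F.twoNorm_conv_le_of_injOn_s a b hb⟩,
    fun ha => ⟨F.convDefined_of_injOn_r a b ha.2, F.twoNorm_conv_le_of_isSlice a b ha⟩⟩
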